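/- arXiv:2511.14873 — 2 statements merged into one kernel-verified Lean document; each statement's English description precedes it below -/
import Mathlib

section
/- For a Gateaux differentiable proper convex lower semicontinuous Ψ on X whose conjugate Ψ* is Gateaux differentiable on DΨ(int dom Ψ) ⊆ int dom Ψ*, the Bregman duality identity holds: D_Ψ(x,y) = D_{Ψ*}(DΨ(y), DΨ(x)) for all x, y ∈ int dom Ψ. -/
open Set

noncomputable section

/-- The Vainberg–Bregman functional `D_Ψ(a,b) = Ψ(a) - Ψ(b) - ⟨a - b, DΨ(b)⟩`. -/
def bregman {E : Type*} [NormedAddCommGroup E] [NormedSpace ℝ E]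
    (Ψ : E → EReal) (DΨ : E → E →L[ℝ] ℝ) (a b : E) : EReal :=
  Ψ a - Ψ b - ((DΨ b) (a - b) : EReal)

/-!
Convexity makes `DΨ(u)` a subgradient of `Ψ` at every `u ∈ int dom Ψ`, so the Fenchel–Young
inequality `Ψ*(w) ≥ w(u) - Ψ(u)` is an equality at `w = DΨ(u)`: `Ψ*(DΨ(u)) = DΨ(u)(u) - Ψ(u)`.
Hence `q ↦ Ψ*(q) - q(x)` is minimal at `DΨ(x)`, and since `Ψ*` is Gateaux differentiable there,
`DΨ*(DΨ(x))` is evaluation at `x`. Substituting both facts into `D_{Ψ*}(DΨ(y), DΨ(x))` gives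
`D_Ψ(x, y)`.
-/

section

variable {E : Type*} [NormedAddCommGroup E] [NormedSpace ℝ E]

theorem ConvexOn.le_sub_of_hasLineDerivAt {s : Set E} {f : E → ℝ} (hf : ConvexOn ℝ s f)
    {u v : E} (hu : u ∈ s) (hv : v ∈ s) {f' : ℝ} (hd : HasLineDerivAt ℝ f f' u (v - u)) :
    f' ≤ f v - f u := by
  set g : ℝ →ᵃ[ℝ] E := AffineMap.lineMap u v
  have hline : ConvexOn ℝ (g ⁻¹' s) (f ∘ g) := hf.comp_affineMap g
  have hg : f ∘ g = fun t => f (u + t • (v - u)) := by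
    ext t
    simp [g, AffineMap.lineMap_apply_module', add_comm]
  have hderiv : HasDerivAt (f ∘ g) f' 0 := hg ▸ hd
  simpa [slope_def_field, g] using
    hline.le_slope_of_hasDerivAt (x := 0) (y := 1) (by simpa [g]) (by simpa [g]) one_pos hderiv

theorem IsLocalMin.hasLineDerivAt_eq_of_sub_linearMap {φ : E → ℝ} {L : E →ₗ[ℝ] ℝ} {a b : E}
    {d : ℝ} (hmin : IsLocalMin (fun q => φ q - L q) a) (hd : HasLineDerivAt ℝ φ d a b) :
    d = L b := by
  have hL : HasLineDerivAt ℝ L (L b) a b := by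
    simpa [HasLineDerivAt] using ((hasDerivAt_id (0 : ℝ)).mul_const (L b)).const_add (L a)
  have hdiff : HasLineDerivAt ℝ (fun q => φ q - L q) (d - L b) a b := HasDerivAt.sub hd hL
  exact sub_eq_zero.mp (hmin.hasLineDerivAt_eq_zero hdiff)

theorem convexOn_toReal_of_jensen {Ψ : E → EReal} (hbot : ∀ u, Ψ u ≠ ⊥)
    (hconvex : ∀ u v : E, ∀ a b : ℝ, 0 ≤ a → 0 ≤ b → a + b = 1 →
      Ψ (a • u + b • v) ≤ (a : EReal) * Ψ u + (b : EReal) * Ψ v) :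
    ConvexOn ℝ {u | Ψ u ≠ ⊤} (fun u => (Ψ u).toReal) := by
  have hle : ∀ u v, Ψ u ≠ ⊤ → Ψ v ≠ ⊤ → ∀ a b : ℝ, 0 ≤ a → 0 ≤ b → a + b = 1 →
      Ψ (a • u + b • v) ≤ ((a * (Ψ u).toReal + b * (Ψ v).toReal : ℝ) : EReal) := by
    intro u v hu hv a b ha hb hab
    rw [EReal.coe_add, EReal.coe_mul, EReal.coe_mul, EReal.coe_toReal hu (hbot u),
      EReal.coe_toReal hv (hbot v)]
    exact hconvex u v a b ha hb hab
  refine ⟨fun u hu v hv a b ha hb hab => ?_, fun u hu v hv a b ha hb hab => ?_⟩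
  · exact ne_top_of_le_ne_top (EReal.coe_ne_top _) (hle u v hu hv a b ha hb hab)
  · simpa only [EReal.toReal_coe, smul_eq_mul] using
      EReal.toReal_le_toReal (hle u v hu hv a b ha hb hab) (hbot _) (EReal.coe_ne_top _)

theorem iSup_sub_eq_of_subgradient {Ψ : E → EReal} (hbot : ∀ u, Ψ u ≠ ⊥) {ℓ : E →L[ℝ] ℝ}
    {u : E} (hu : Ψ u ≠ ⊤) (hsub : ∀ v, Ψ v ≠ ⊤ → (Ψ u).toReal + ℓ (v - u) ≤ (Ψ v).toReal) :
    ⨆ v, ((ℓ v : EReal) - Ψ v) = ((ℓ u - (Ψ u).toReal : ℝ) : EReal) := by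
  refine le_antisymm (iSup_le fun v => ?_) (le_iSup_of_le u ?_)
  · by_cases hv : Ψ v = ⊤
    · simp [hv]
    · rw [← EReal.coe_toReal hv (hbot v), ← EReal.coe_sub, EReal.coe_le_coe_iff]
      linarith [hsub v hv, ℓ.map_sub v u]
  · rw [EReal.coe_sub, EReal.coe_toReal hu (hbot u)]

theorem hasLineDerivAt_conj_eq_apply {Ψ : E → EReal} (hbot : ∀ u, Ψ u ≠ ⊥)
    {Ψs : (E →L[ℝ] ℝ) → EReal} (hconj : ∀ w, Ψs w = ⨆ u, ((w u : EReal) - Ψ u))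
    {x : E} (hx : Ψ x ≠ ⊤) {w₀ : E →L[ℝ] ℝ} (hw₀ : w₀ ∈ interior {w | Ψs w ≠ ⊤})
    (hval : Ψs w₀ = ((w₀ x - (Ψ x).toReal : ℝ) : EReal)) {p : E →L[ℝ] ℝ} {d : ℝ}
    (hd : HasLineDerivAt ℝ (fun w => (Ψs w).toReal) d w₀ p) :
    d = p x := by
  have hyoung : ∀ w, ((w x - (Ψ x).toReal : ℝ) : EReal) ≤ Ψs w := fun w => by
    rw [hconj, EReal.coe_sub, EReal.coe_toReal hx (hbot x)]
    exact le_iSup (fun u => (w u : EReal) - Ψ u) x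
  -- As `(⊤ : EReal).toReal = 0`, the Fenchel–Young inequality survives `toReal` only where `Ψs`
  -- is finite, i.e. near `w₀`.
  have hmin : IsLocalMin (fun w : E →L[ℝ] ℝ => (Ψs w).toReal - w x) w₀ := by
    filter_upwards [isOpen_interior.mem_nhds hw₀] with w hw
    have := EReal.toReal_le_toReal (hyoung w) (EReal.coe_ne_bot _) (interior_subset hw)
    rw [EReal.toReal_coe] at this
    rw [hval, EReal.toReal_coe]
    linarith
  exact hmin.hasLineDerivAt_eq_of_sub_linearMap
    (L := (ContinuousLinearMap.apply ℝ ℝ x).toLinearMap) hd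

end

theorem bregman_duality_general
    {X : Type*} [NormedAddCommGroup X] [NormedSpace ℝ X]
    (Ψ : X → EReal) (DΨ : X → X →L[ℝ] ℝ)
    (Ψs : (X →L[ℝ] ℝ) → EReal) (DΨs : (X →L[ℝ] ℝ) → (X →L[ℝ] ℝ) →L[ℝ] ℝ)
    (hproper_bot : ∀ w, Ψ w ≠ ⊥)
    (hconvex : ∀ u v : X, ∀ a b : ℝ, 0 ≤ a → 0 ≤ b → a + b = 1 →
      Ψ (a • u + b • v) ≤ (a : EReal) * Ψ u + (b : EReal) * Ψ v)
    (hgateaux : ∀ p ∈ interior {u : X | Ψ u ≠ ⊤}, ∀ v : X,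
      HasLineDerivAt ℝ (fun u => (Ψ u).toReal) ((DΨ p) v) p v)
    (hconj : ∀ w : X →L[ℝ] ℝ, Ψs w = ⨆ u : X, ((w u : EReal) - Ψ u))
    (hsub : DΨ '' interior {u : X | Ψ u ≠ ⊤} ⊆ interior {w : X →L[ℝ] ℝ | Ψs w ≠ ⊤})
    (hgateaux_s : ∀ w ∈ DΨ '' interior {u : X | Ψ u ≠ ⊤}, ∀ p : X →L[ℝ] ℝ,
      HasLineDerivAt ℝ (fun q => (Ψs q).toReal) ((DΨs w) p) w p)
    (x : X) (hx : x ∈ interior {u : X | Ψ u ≠ ⊤})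
    (y : X) (hy : y ∈ interior {u : X | Ψ u ≠ ⊤}) :
    bregman Ψ DΨ x y = bregman Ψs DΨs (DΨ y) (DΨ x) := by
  have hψ := convexOn_toReal_of_jensen hproper_bot hconvex
  have hfin : ∀ u ∈ interior {u : X | Ψ u ≠ ⊤}, Ψ u = ((Ψ u).toReal : EReal) :=
    fun u hu => (EReal.coe_toReal (interior_subset hu) (hproper_bot u)).symm
  have hval : ∀ u ∈ interior {u : X | Ψ u ≠ ⊤},
      Ψs (DΨ u) = ((DΨ u u - (Ψ u).toReal : ℝ) : EReal) := fun u hu =>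
    (hconj _).trans <| iSup_sub_eq_of_subgradient hproper_bot (interior_subset hu) fun v hv => by
      linarith [hψ.le_sub_of_hasLineDerivAt (interior_subset hu) hv (hgateaux u hu (v - u))]
  have hDΨs : DΨs (DΨ x) (DΨ y - DΨ x) = DΨ y x - DΨ x x :=
    hasLineDerivAt_conj_eq_apply hproper_bot hconj (interior_subset hx) (hsub ⟨x, hx, rfl⟩)
      (hval x hx) (hgateaux_s _ ⟨x, hx, rfl⟩ _)
  unfold bregman
  rw [hfin x hx, hfin y hy, hval x hx, hval y hy, hDΨs, map_sub]
  norm_cast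
  ring

/-- Bregman duality identity: if the Mandelbrojt–Fenchel conjugate `Ψ*` is Gateaux
differentiable on `DΨ(int dom Ψ) ⊆ int dom Ψ*`, then
`D_Ψ(x,y) = D_{Ψ*}(DΨ(y), DΨ(x))` for all `x, y ∈ int dom Ψ`. -/
theorem bregman_duality
    {X : Type*} [NormedAddCommGroup X] [NormedSpace ℝ X] [CompleteSpace X]
    (Ψ : X → EReal) (DΨ : X → X →L[ℝ] ℝ)
    (Ψs : (X →L[ℝ] ℝ) → EReal) (DΨs : (X →L[ℝ] ℝ) → (X →L[ℝ] ℝ) →L[ℝ] ℝ)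
    (hproper_bot : ∀ w, Ψ w ≠ ⊥) (hproper_top : ∃ w, Ψ w ≠ ⊤)
    (hconvex : ∀ u v : X, ∀ a b : ℝ, 0 ≤ a → 0 ≤ b → a + b = 1 →
      Ψ (a • u + b • v) ≤ (a : EReal) * Ψ u + (b : EReal) * Ψ v)
    (hlsc : LowerSemicontinuous Ψ)
    (hgateaux : ∀ p ∈ interior {u : X | Ψ u ≠ ⊤}, ∀ v : X,
      HasLineDerivAt ℝ (fun u => (Ψ u).toReal) ((DΨ p) v) p v)
    (hconj : ∀ w : X →L[ℝ] ℝ, Ψs w = ⨆ u : X, ((w u : EReal) - Ψ u))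
    (hne : (interior {u : X | Ψ u ≠ ⊤}).Nonempty)
    (hsub : DΨ '' interior {u : X | Ψ u ≠ ⊤} ⊆ interior {w : X →L[ℝ] ℝ | Ψs w ≠ ⊤})
    (hgateaux_s : ∀ w ∈ DΨ '' interior {u : X | Ψ u ≠ ⊤}, ∀ p : X →L[ℝ] ℝ,
      HasLineDerivAt ℝ (fun q => (Ψs q).toReal) ((DΨs w) p) w p)
    (x : X) (hx : x ∈ interior {u : X | Ψ u ≠ ⊤})
    (y : X) (hy : y ∈ interior {u : X | Ψ u ≠ ⊤}) :
    bregman Ψ DΨ x y = bregman Ψs DΨs (DΨ y) (DΨ x) :=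
  bregman_duality_general Ψ DΨ Ψs DΨs hproper_bot hconvex hgateaux hconj hsub hgateaux_s x hx y hy
end
end

section
/- Extension of Hölder homeomorphisms from spheres to balls: if α : S(Y) → S(X) between unit spheres of Banach spaces is t-Lipschitz–Hölder continuous with t ∈ (0,1], then the map sending x ∈ B(Y)\{0} to ‖x‖·α(x/‖x‖) and 0 to 0 is t-Lipschitz–Hölder continuous from the closed unit ball of Y to the closed unit ball of X. -/
/-!
Write `a = ‖y₁‖ ≥ b = ‖y₂‖`, `d = ‖y₁ - y₂‖` and `uᵢ = yᵢ/‖yᵢ‖`, and split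
`a α(u₁) - b α(u₂) = a (α(u₁) - α(u₂)) + (a - b) α(u₂)`. Since `‖u₁ - u₂‖ ≤ 2d/a`, the Hölder
bound on the sphere makes the first term at most `a · c (2d/a)^t ≤ 2c d^t`, as `a^(1-t) ≤ 1`.
The second term is at most `a - b ≤ d ≤ 2 d^t`, as `d ≤ 2`.
-/

namespace Real

lemma self_le_two_mul_rpow {d t : ℝ} (ht0 : 0 ≤ t) (ht1 : t ≤ 1) (hd0 : 0 ≤ d) (hd2 : d ≤ 2) :
    d ≤ 2 * d ^ t :=
  calc d = 2 * (d / 2) := by ring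
    _ ≤ 2 * (d / 2) ^ t := by gcongr; exact self_le_rpow_of_le_one (by positivity) (by linarith) ht1
    _ ≤ 2 * d ^ t := by gcongr; linarith

lemma two_mul_rpow_le {d t : ℝ} (ht1 : t ≤ 1) (hd0 : 0 ≤ d) : (2 * d) ^ t ≤ 2 * d ^ t := by
  rw [mul_rpow zero_le_two hd0]
  gcongr
  exact rpow_le_self_of_one_le one_le_two ht1

lemma mul_div_rpow_le_rpow {a x t : ℝ} (ha0 : 0 < a) (ha1 : a ≤ 1) (hx : 0 ≤ x) (ht1 : t ≤ 1) :
    a * (x / a) ^ t ≤ x ^ t := by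
  have hat : a ≤ a ^ t := self_le_rpow_of_le_one ha0.le ha1 ht1
  rw [div_rpow hx ha0.le, mul_div_assoc', div_le_iff₀ (by positivity), mul_comm]
  gcongr

end Real

namespace NormedSpace

variable {E : Type*} [NormedAddCommGroup E] [NormedSpace ℝ E]

lemma norm_normalize_le_one (y : E) : ‖normalize y‖ ≤ 1 := by
  rcases eq_or_ne y 0 with rfl | hy
  · simp
  · exact (norm_normalize hy).le

lemma norm_normalize_sub_normalize_le {x y : E} (hx : x ≠ 0) (hyx : ‖y‖ ≤ ‖x‖) :
    ‖normalize x - normalize y‖ ≤ 2 * ‖x - y‖ / ‖x‖ := by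
  have hx₀ : 0 < ‖x‖ := norm_pos_iff.mpr hx
  have hsplit : normalize x - normalize y =
      ‖x‖⁻¹ • (x - y) + (‖x‖⁻¹ * ‖y‖ - 1) • normalize y := by
    have hy : ‖x‖⁻¹ • y = (‖x‖⁻¹ * ‖y‖) • normalize y := by rw [mul_smul, norm_smul_normalize]
    rw [smul_sub, hy, normalize]
    module
  have hradial : |‖x‖⁻¹ * ‖y‖ - 1| ≤ ‖x - y‖ / ‖x‖ := by
    rw [abs_of_nonpos (sub_nonpos.mpr ((inv_mul_le_one₀ hx₀).mpr hyx)), le_div_iff₀ hx₀]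
    have := norm_sub_norm_le x y
    field_simp
    linarith
  calc ‖normalize x - normalize y‖
      ≤ ‖x‖⁻¹ * ‖x - y‖ + |‖x‖⁻¹ * ‖y‖ - 1| * ‖normalize y‖ := by
        rw [hsplit]
        refine (norm_add_le _ _).trans_eq ?_
        rw [norm_smul, norm_smul, norm_inv, norm_norm, Real.norm_eq_abs]
    _ ≤ ‖x - y‖ / ‖x‖ + ‖x - y‖ / ‖x‖ := by
        rw [inv_mul_eq_div]
        gcongr
        exact (mul_le_of_le_one_right (abs_nonneg _) (norm_normalize_le_one y)).trans hradial
    _ = 2 * ‖x - y‖ / ‖x‖ := by ring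

lemma norm_smul_sub_smul_le {a b : ℝ} {v w : E} (hb : 0 ≤ b) (hba : b ≤ a) (hw : ‖w‖ ≤ 1) :
    ‖a • v - b • w‖ ≤ a * ‖v - w‖ + (a - b) :=
  calc ‖a • v - b • w‖ = ‖a • (v - w) + (a - b) • w‖ := by congr 1; module
    _ ≤ a * ‖v - w‖ + (a - b) * ‖w‖ := by
        refine (norm_add_le _ _).trans_eq ?_
        rw [norm_smul, norm_smul, Real.norm_of_nonneg (hb.trans hba),
          Real.norm_of_nonneg (sub_nonneg.mpr hba)]
    _ ≤ a * ‖v - w‖ + (a - b) := by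
        gcongr
        exact mul_le_of_le_one_right (sub_nonneg.mpr hba) hw

end NormedSpace

section RadialExtension

variable {X Y : Type*} [NormedAddCommGroup X] [NormedSpace ℝ X]
  [NormedAddCommGroup Y] [NormedSpace ℝ Y]

noncomputable def radialExtension (α : Y → X) (y : Y) : X :=
  ‖y‖ • α (NormedSpace.normalize y)

variable {α : Y → X}

@[simp]
lemma radialExtension_zero (α : Y → X) : radialExtension α 0 = 0 := by
  simp [radialExtension]

lemma norm_radialExtension (hsphere : ∀ y : Y, ‖y‖ = 1 → ‖α y‖ = 1) (y : Y) :
    ‖radialExtension α y‖ = ‖y‖ := by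
  rcases eq_or_ne y 0 with rfl | hy
  · simp
  · rw [radialExtension, norm_smul, norm_norm, hsphere _ (NormedSpace.norm_normalize hy), mul_one]

lemma norm_radialExtension_sub_le {c t : ℝ} (hsphere : ∀ y : Y, ‖y‖ = 1 → ‖α y‖ = 1)
    (hc : 0 ≤ c) (ht0 : 0 ≤ t) (ht1 : t ≤ 1)
    (hα : ∀ y₁ y₂ : Y, ‖y₁‖ = 1 → ‖y₂‖ = 1 → ‖α y₁ - α y₂‖ ≤ c * ‖y₁ - y₂‖ ^ t)
    {y₁ y₂ : Y} (h₁ : ‖y₁‖ ≤ 1) (h₂ : ‖y₂‖ ≤ 1) :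
    ‖radialExtension α y₁ - radialExtension α y₂‖ ≤ (2 * c + 2) * ‖y₁ - y₂‖ ^ t := by
  wlog h₂₁ : ‖y₂‖ ≤ ‖y₁‖ generalizing y₁ y₂
  · rw [norm_sub_rev, norm_sub_rev y₁]
    exact this h₂ h₁ (le_of_not_ge h₂₁)
  set d := ‖y₁ - y₂‖
  have hd2 : d ≤ 2 := (norm_sub_le y₁ y₂).trans (by linarith)
  have hd : d ≤ 2 * d ^ t := Real.self_le_two_mul_rpow ht0 ht1 (norm_nonneg _) hd2
  have hdt : 0 ≤ c * d ^ t := by positivity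
  rcases eq_or_ne y₂ 0 with rfl | hy₂
  · rw [radialExtension_zero, sub_zero, norm_radialExtension hsphere, ← sub_zero y₁]
    linarith
  have hy₁ : y₁ ≠ 0 := norm_pos_iff.mp ((norm_pos_iff.mpr hy₂).trans_le h₂₁)
  have ha : 0 < ‖y₁‖ := norm_pos_iff.mpr hy₁
  calc ‖radialExtension α y₁ - radialExtension α y₂‖
      ≤ ‖y₁‖ * ‖α (NormedSpace.normalize y₁) - α (NormedSpace.normalize y₂)‖
          + (‖y₁‖ - ‖y₂‖) :=
        NormedSpace.norm_smul_sub_smul_le (norm_nonneg _) h₂₁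
          (hsphere _ (NormedSpace.norm_normalize hy₂)).le
    _ ≤ ‖y₁‖ * (c * (2 * d / ‖y₁‖) ^ t) + d := by
        gcongr
        · exact (hα _ _ (NormedSpace.norm_normalize hy₁) (NormedSpace.norm_normalize hy₂)).trans
            (by gcongr; exact NormedSpace.norm_normalize_sub_normalize_le hy₁ h₂₁)
        · linarith [norm_sub_norm_le y₁ y₂]
    _ = c * (‖y₁‖ * (2 * d / ‖y₁‖) ^ t) + d := by ring
    _ ≤ c * (2 * d) ^ t + 2 * d ^ t := by
        gcongr
        exact Real.mul_div_rpow_le_rpow ha h₁ (by positivity) ht1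
    _ ≤ c * (2 * d ^ t) + 2 * d ^ t := by
        gcongr
        exact Real.two_mul_rpow_le ht1 (norm_nonneg _)
    _ = (2 * c + 2) * d ^ t := by ring

end RadialExtension

theorem hoelder_sphere_extension_to_ball_general
    {X Y : Type*} [NormedAddCommGroup X] [NormedSpace ℝ X]
    [NormedAddCommGroup Y] [NormedSpace ℝ Y]
    (α : Y → X) (t : ℝ) (ht0 : 0 < t) (ht1 : t ≤ 1)
    (hsphere : ∀ y : Y, ‖y‖ = 1 → ‖α y‖ = 1)
    (hα : ∃ c > 0, ∀ y₁ y₂ : Y, ‖y₁‖ = 1 → ‖y₂‖ = 1 →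
      ‖α y₁ - α y₂‖ ≤ c * ‖y₁ - y₂‖ ^ t) :
    (∀ y : Y, ‖y‖ ≤ 1 → ‖‖y‖ • α (‖y‖⁻¹ • y)‖ ≤ 1) ∧
    (‖(0:Y)‖ • α (‖(0:Y)‖⁻¹ • (0:Y)) = (0:X)) ∧
    ∃ c > 0, ∀ y₁ y₂ : Y, ‖y₁‖ ≤ 1 → ‖y₂‖ ≤ 1 →
      ‖‖y₁‖ • α (‖y₁‖⁻¹ • y₁) - ‖y₂‖ • α (‖y₂‖⁻¹ • y₂)‖ ≤ c * ‖y₁ - y₂‖ ^ t := by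
  obtain ⟨c, hc, hαc⟩ := hα
  refine ⟨fun y hy => ?_, radialExtension_zero α, 2 * c + 2, by positivity, fun y₁ y₂ h₁ h₂ => ?_⟩
  · exact (norm_radialExtension hsphere y).trans_le hy
  · exact norm_radialExtension_sub_le hsphere hc.le ht0.le ht1 hαc h₁ h₂

/-- Extension of Hölder homeomorphisms from spheres to balls: if `α : S(Y) → S(X)` between
unit spheres of Banach spaces is `t`-Lipschitz–Hölder continuous with `t ∈ (0,1]`, then the
map `x ↦ ‖x‖ • α(x/‖x‖)` (sending `0` to `0`) is `t`-Lipschitz–Hölder continuous from the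
closed unit ball of `Y` to the closed unit ball of `X`. -/
theorem hoelder_sphere_extension_to_ball
    {X Y : Type*} [NormedAddCommGroup X] [NormedSpace ℝ X] [CompleteSpace X]
    [NormedAddCommGroup Y] [NormedSpace ℝ Y] [CompleteSpace Y]
    (α : Y → X) (t : ℝ) (ht0 : 0 < t) (ht1 : t ≤ 1)
    (hsphere : ∀ y : Y, ‖y‖ = 1 → ‖α y‖ = 1)
    (hα : ∃ c > 0, ∀ y₁ y₂ : Y, ‖y₁‖ = 1 → ‖y₂‖ = 1 →
      ‖α y₁ - α y₂‖ ≤ c * ‖y₁ - y₂‖ ^ t) :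
    (∀ y : Y, ‖y‖ ≤ 1 → ‖‖y‖ • α (‖y‖⁻¹ • y)‖ ≤ 1) ∧
    (‖(0:Y)‖ • α (‖(0:Y)‖⁻¹ • (0:Y)) = (0:X)) ∧
    ∃ c > 0, ∀ y₁ y₂ : Y, ‖y₁‖ ≤ 1 → ‖y₂‖ ≤ 1 →
      ‖‖y₁‖ • α (‖y₁‖⁻¹ • y₁) - ‖y₂‖ • α (‖y₂‖⁻¹ • y₂)‖ ≤ c * ‖y₁ - y₂‖ ^ t :=
  hoelder_sphere_extension_to_ball_general α t ht0 ht1 hsphere hα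
end
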